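/- arXiv:1011.0669 — 2 statements merged into one kernel-verified Lean document; each statement's English description precedes it below -/
import Mathlib

section
/- With α = (1-μ)/√(2D) and ν∞ = (α/√π)e^{-α²}, the steady-state cross-covariance function C(τ) = ν∞(H(τ) - ν∞), where H(τ) = J(m_c(τ), σ_c²(τ), D) with m_c(τ) = e^{-τ}(c(1-μ)+μ) + (1-e^{-τ})μ and σ_c²(τ) = e^{-2τ}D(1-c²) + (1-e^{-2τ})D, equals (α² e^{-α²}/π) · ( e^{τ - α²(e^τ - c)/(c + e^τ)} / ( √(1 - c² e^{-2τ}) (c + e^τ) ) - e^{-α²} ) for τ > 0. -/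
/-!
With `e = exp (-τ)` one has `1 - m_c = (1 - μ) (1 - c e)` and `σ_c² = D (1 - c e) (1 + c e)`, so
the Gaussian flux collapses to `α / √π · exp (-α² (1 - c e) / (1 + c e)) / (√(1 - c² e²) (1 + c e))`;
multiplying numerator and denominator by `exp τ` gives the stated closed form.
-/

open Real

lemma exp_neg_two_mul_eq_sq (τ : ℝ) : exp (-2 * τ) = exp (-τ) ^ 2 := by
  rw [← exp_nat_mul]; ring_nf

lemma gaussianFlux_eq {D p q : ℝ} (hD : 0 < D) (hp : 0 < p) (hq : 0 < q) (a : ℝ) :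
    a * √(2 * D) * p * D / (√(2 * π) * √(D * (p * q)) ^ 3) *
        exp (-(a * √(2 * D) * p) ^ 2 / (2 * (D * (p * q))))
      = a / √π * (exp (-a ^ 2 * p / q) / (√(p * q) * q)) := by
  have hexp : -(a * √(2 * D) * p) ^ 2 / (2 * (D * (p * q))) = -a ^ 2 * p / q := by
    rw [mul_pow, mul_pow, sq_sqrt (by positivity)]
    field_simp
  have hsq : √(D * (p * q)) ^ 3 = D * √D * (p * q) * √(p * q) := by
    rw [sqrt_mul hD.le, mul_pow, pow_succ, sq_sqrt hD.le, pow_succ, sq_sqrt (by positivity)]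
    ring
  rw [hexp, hsq, sqrt_mul zero_le_two, sqrt_mul zero_le_two]
  have := sqrt_pos.2 hD
  have := sqrt_pos.2 (mul_pos hp hq)
  have := sqrt_pos.2 pi_pos
  have := sqrt_pos.2 (zero_lt_two' ℝ)
  field_simp

lemma exp_sub_div_div_sqrt_eq (a c τ : ℝ) (hq : 1 + c * exp (-τ) ≠ 0) :
    exp (τ - a ^ 2 * (exp τ - c) / (c + exp τ)) /
        (√(1 - c ^ 2 * exp (-2 * τ)) * (c + exp τ))
      = exp (-a ^ 2 * (1 - c * exp (-τ)) / (1 + c * exp (-τ))) /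
          (√((1 - c * exp (-τ)) * (1 + c * exp (-τ))) * (1 + c * exp (-τ))) := by
  have hE : exp τ * exp (-τ) = 1 := by rw [← exp_add, add_neg_cancel, exp_zero]
  have hcE : c + exp τ = exp τ * (1 + c * exp (-τ)) := by linear_combination -c * hE
  have hratio : a ^ 2 * (exp τ - c) / (c + exp τ)
      = a ^ 2 * (1 - c * exp (-τ)) / (1 + c * exp (-τ)) := by
    rw [hcE]; field_simp; linear_combination a ^ 2 * c * hE
  have hvar : 1 - c ^ 2 * exp (-2 * τ) = (1 - c * exp (-τ)) * (1 + c * exp (-τ)) := by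
    rw [exp_neg_two_mul_eq_sq]; ring
  rw [hratio, hvar, hcE, sub_eq_add_neg, exp_add, neg_mul, neg_div, mul_left_comm,
    mul_div_mul_left _ _ (exp_pos τ).ne']

theorem stmt_6_general (μ D c τ : ℝ) (hD : 0 < D) (hc0 : 0 ≤ c) (hc1 : c < 1)
    (hτ : 0 < τ) :
    let α := (1 - μ) / Real.sqrt (2 * D)
    let ν := α / Real.sqrt Real.pi * Real.exp (-α ^ 2)
    let mc := Real.exp (-τ) * (c * (1 - μ) + μ) + (1 - Real.exp (-τ)) * μ
    let sc := Real.exp (-2 * τ) * (D * (1 - c ^ 2)) + (1 - Real.exp (-2 * τ)) * D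
    let H := ((1 - mc) * D / (Real.sqrt (2 * Real.pi) * (Real.sqrt sc) ^ 3)) *
        Real.exp (-(1 - mc) ^ 2 / (2 * sc))
    ν * (H - ν)
      = (α ^ 2 * Real.exp (-α ^ 2) / Real.pi) *
          (Real.exp (τ - α ^ 2 * (Real.exp τ - c) / (c + Real.exp τ)) /
              (Real.sqrt (1 - c ^ 2 * Real.exp (-2 * τ)) * (c + Real.exp τ))
            - Real.exp (-α ^ 2)) := by
  dsimp only
  have he : exp (-τ) < 1 := exp_lt_one_iff.2 (neg_lt_zero.2 hτ)
  have hp : 0 < 1 - c * exp (-τ) := by nlinarith [exp_pos (-τ)]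
  have hq : 0 < 1 + c * exp (-τ) := by positivity
  have hmean : 1 - (exp (-τ) * (c * (1 - μ) + μ) + (1 - exp (-τ)) * μ)
      = (1 - μ) / √(2 * D) * √(2 * D) * (1 - c * exp (-τ)) := by
    rw [div_mul_cancel₀ _ (by positivity)]; ring
  have hvar : exp (-2 * τ) * (D * (1 - c ^ 2)) + (1 - exp (-2 * τ)) * D
      = D * ((1 - c * exp (-τ)) * (1 + c * exp (-τ))) := by
    rw [exp_neg_two_mul_eq_sq]; ring
  rw [hmean, hvar, gaussianFlux_eq hD hp hq, exp_sub_div_div_sqrt_eq _ _ _ hq.ne']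
  field_simp
  rw [sq_sqrt pi_pos.le]
  ring

/-- Closed form for the steady-state cross-covariance function of the Gaussian
approximation. -/
theorem stmt_6 (μ D c τ : ℝ) (hμ : μ < 1) (hD : 0 < D) (hc0 : 0 ≤ c) (hc1 : c < 1)
    (hτ : 0 < τ) :
    let α := (1 - μ) / Real.sqrt (2 * D)
    let ν := α / Real.sqrt Real.pi * Real.exp (-α ^ 2)
    let mc := Real.exp (-τ) * (c * (1 - μ) + μ) + (1 - Real.exp (-τ)) * μ
    let sc := Real.exp (-2 * τ) * (D * (1 - c ^ 2)) + (1 - Real.exp (-2 * τ)) * D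
    let H := ((1 - mc) * D / (Real.sqrt (2 * Real.pi) * (Real.sqrt sc) ^ 3)) *
        Real.exp (-(1 - mc) ^ 2 / (2 * sc))
    ν * (H - ν)
      = (α ^ 2 * Real.exp (-α ^ 2) / Real.pi) *
          (Real.exp (τ - α ^ 2 * (Real.exp τ - c) / (c + Real.exp τ)) /
              (Real.sqrt (1 - c ^ 2 * Real.exp (-2 * τ)) * (c + Real.exp τ))
            - Real.exp (-α ^ 2)) :=
  stmt_6_general μ D c τ hD hc0 hc1 hτ
end

section
/- The first-order Taylor expansion in c of the cross-covariance function C(τ; c) = (α²e^{-α²}/π)( e^{τ - α²(e^τ-c)/(c+e^τ)} / (√(1-c²e^{-2τ})(c+e^τ)) - e^{-α²} ) around c = 0 is C(τ; c) = (c/π) α²(2α² - 1) e^{-2α² - τ} + O(c²); that is, C(τ; 0) = 0 and ∂C/∂c evaluated at c = 0 equals (1/π) α²(2α² - 1) e^{-2α² - τ}. -/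
/-!
The square-root factor is even in `c`, so it has slope `0` at `c = 0` and only the exponential
numerator and the factor `c + e^τ` contribute to first order. The exponent
`τ - α²(e^τ - c)/(c + e^τ)` equals `τ - α²` at `c = 0` and has slope `2α²/e^τ` there, so the
quotient rule gives the bracket the slope `e^{-α²}(2α² - 1)/e^τ`, while its value `e^{-α²}`
cancels the subtracted constant.
-/

open Real

lemma hasDerivAt_mul_sub_div_add_zero (a E : ℝ) (hE : E ≠ 0) :
    HasDerivAt (fun c : ℝ => a * (E - c) / (c + E)) (-(2 * a / E)) 0 := by
  have hnum : HasDerivAt (fun c : ℝ => a * (E - c)) (-a) 0 := by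
    simpa using ((hasDerivAt_id (0 : ℝ)).const_sub E).const_mul a
  have hden : HasDerivAt (fun c : ℝ => c + E) 1 0 := (hasDerivAt_id (0 : ℝ)).add_const E
  refine (hnum.div hden (by simpa using hE)).congr_deriv ?_
  simp only [zero_add, sub_zero, mul_one]
  field_simp
  ring

lemma hasDerivAt_sqrt_one_sub_sq_mul_zero (k : ℝ) :
    HasDerivAt (fun c : ℝ => √(1 - c ^ 2 * k)) 0 0 := by
  have hu : HasDerivAt (fun c : ℝ => 1 - c ^ 2 * k) 0 0 := by
    simpa using ((hasDerivAt_pow 2 (0 : ℝ)).mul_const k).const_sub 1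
  simpa using hu.sqrt (by simp)

lemma hasDerivAt_exp_div_sqrt_mul_add_zero (a τ E k : ℝ) (hE : E ≠ 0) :
    HasDerivAt
      (fun c : ℝ => exp (τ - a * (E - c) / (c + E)) / (√(1 - c ^ 2 * k) * (c + E)))
      (exp (τ - a) * (2 * a - 1) / E ^ 2) 0 := by
  have hnum := ((hasDerivAt_mul_sub_div_add_zero a E hE).const_sub τ).exp
  have hden := (hasDerivAt_sqrt_one_sub_sq_mul_zero k).mul ((hasDerivAt_id (0 : ℝ)).add_const E)
  refine (hnum.div hden (by simpa using hE)).congr_deriv ?_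
  simp only [Pi.mul_apply, id, zero_add, sub_zero, ne_eq,
    OfNat.ofNat_ne_zero, not_false_eq_true, zero_pow, zero_mul, Real.sqrt_one]
  field_simp

theorem stmt_7_general (α τ : ℝ) :
    let C : ℝ → ℝ := fun c =>
      (α ^ 2 * Real.exp (-α ^ 2) / Real.pi) *
        (Real.exp (τ - α ^ 2 * (Real.exp τ - c) / (c + Real.exp τ)) /
            (Real.sqrt (1 - c ^ 2 * Real.exp (-2 * τ)) * (c + Real.exp τ))
          - Real.exp (-α ^ 2))
    C 0 = 0 ∧
    deriv C 0 = (1 / Real.pi) * α ^ 2 * (2 * α ^ 2 - 1) * Real.exp (-2 * α ^ 2 - τ) := by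
  intro C
  have hE : exp τ ≠ 0 := (exp_pos τ).ne'
  have hexp : exp (τ - α ^ 2) / exp τ = exp (-α ^ 2) := by
    rw [← exp_sub]; ring_nf
  refine ⟨?_, ?_⟩
  · simp [C, hE, hexp]
  · have hC := ((hasDerivAt_exp_div_sqrt_mul_add_zero (α ^ 2) τ (exp τ) (exp (-2 * τ)) hE
      ).sub_const (exp (-α ^ 2))).const_mul (α ^ 2 * exp (-α ^ 2) / π)
    have hexp₂ : exp (-2 * α ^ 2 - τ) = exp (-α ^ 2) * exp (τ - α ^ 2) / exp τ ^ 2 := by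
      rw [← exp_add, ← exp_nat_mul, ← exp_sub]; push_cast; ring_nf
    rw [hC.deriv, hexp₂]
    ring

/-- First order Taylor expansion in c of the cross-covariance function. -/
theorem stmt_7 (α τ : ℝ) (hα : 0 < α) (hτ : 0 < τ) :
    let C : ℝ → ℝ := fun c =>
      (α ^ 2 * Real.exp (-α ^ 2) / Real.pi) *
        (Real.exp (τ - α ^ 2 * (Real.exp τ - c) / (c + Real.exp τ)) /
            (Real.sqrt (1 - c ^ 2 * Real.exp (-2 * τ)) * (c + Real.exp τ))
          - Real.exp (-α ^ 2))
    C 0 = 0 ∧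
    deriv C 0 = (1 / Real.pi) * α ^ 2 * (2 * α ^ 2 - 1) * Real.exp (-2 * α ^ 2 - τ) :=
  stmt_7_general α τ
end
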